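/- ₅F₄(1/2, 2/3, 1, 1, 4/3; 5/6, 7/6, 3/2, 3/2; −1) = 3π²/32 + (3/4)·log²(√2+1) − (3/8)·log²(2−√3). -/

import Mathlib

/-!
The factors of Wallis' reduction formula for `∫₀^π sin^(6n+3)` are exactly the Pochhammer ratios
of the series, so its `n`-th term is `(3/4) (-1)ⁿ/(2n+1) ∫₀^π sin^(6n+3)`. Summing the Taylor
series of `arctan` under the integral, the series equals `(3/2) ∫₀^{π/2} arctan (sin³ x) dx`, and
`arctan (sin³ x) = arctan (sin x / cos² x) - arctan (sin x)`.

Both integrals are evaluated by differentiating in a parameter. For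
`A θ = ∫₀^{π/2} arctan (tan θ sin x) dx` one finds `A' θ = artanh (sin θ) / sin θ`, so
`A θ + A (π/2 - θ) + artanh (sin θ) artanh (cos θ)` is constant; letting `θ → 0` gives `π²/4`,
and `θ = π/4` gives `∫ arctan (sin x) = π²/8 - log² (√2 + 1) / 2`. For
`C a = ∫₀^{π/2} arctan (a sin x / cos² x) dx`, the derivative `C' a` is the integral of a rational
function of `cos x`, found in closed form by partial fractions; comparing `C` with an explicit
primitive of that closed form on `[0, 1]` gives `C 1 = 3π²/16 - log² (2 - √3) / 4`.
-/

noncomputable def poch (a : ℝ) (n : ℕ) : ℝ := ∏ i ∈ Finset.range n, (a + i)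

open Real Filter Set Topology MeasureTheory intervalIntegral

lemma poch_succ (a : ℝ) (n : ℕ) : poch a (n + 1) = poch a n * (a + n) :=
  Finset.prod_range_succ _ _

lemma poch_pos {a : ℝ} (ha : 0 < a) (n : ℕ) : 0 < poch a n :=
  Finset.prod_pos fun i _ => by positivity

lemma poch_one (n : ℕ) : poch 1 n = n.factorial := by
  induction n with
  | zero => simp [poch]
  | succ n ih => rw [poch_succ, ih, Nat.factorial_succ]; push_cast; ring

lemma poch_add_one_mul (a : ℝ) (n : ℕ) : poch (a + 1) n * a = (a + n) * poch a n := by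
  induction n with
  | zero => simp [poch]
  | succ n ih => rw [poch_succ, poch_succ, mul_right_comm, ih]; push_cast; ring

lemma integral_sin_pow_add_two (k : ℕ) :
    (k + 2) * ∫ x in 0..π, sin x ^ (k + 2) = (k + 1) * ∫ x in 0..π, sin x ^ k := by
  rw [integral_sin_pow]
  field_simp
  simp

lemma integral_sin_pow_mul_succ (k : ℕ) :
    (∫ x in 0..π, sin x ^ k) * (∫ x in 0..π, sin x ^ (k + 1)) = 2 * π / (k + 1) := by
  induction k with
  | zero => simp; ring
  | succ k ih =>
    have h := integral_sin_pow_add_two k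
    field_simp at ih ⊢
    push_cast
    linear_combination (∫ x in 0..π, sin x ^ (k + 1)) * h + ih

lemma integral_sin_pow_succ_le_sqrt (k : ℕ) :
    ∫ x in 0..π, sin x ^ (k + 1) ≤ √(2 * π / (k + 1)) := by
  rw [← integral_sin_pow_mul_succ]
  apply le_sqrt_of_sq_le
  rw [sq]
  exact mul_le_mul_of_nonneg_right (integral_sin_pow_succ_le k) (integral_sin_pow_pos _).le

/-- Each step `n ↦ n + 1` multiplies the sine integral by
`(6n+4)(6n+6)(6n+8) / ((6n+5)(6n+7)(6n+9)) = (n+2/3)(n+1)(n+4/3) / ((n+5/6)(n+7/6)(n+3/2))`. -/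
lemma integral_sin_pow_six_mul_add_three_mul_poch (n : ℕ) :
    3 * (∫ x in 0..π, sin x ^ (6 * n + 3)) * (poch (5/6) n * poch (7/6) n * poch (3/2) n) =
      4 * (poch (2/3) n * poch (4/3) n * poch 1 n) := by
  induction n with
  | zero => simp [poch]; norm_num
  | succ n ih =>
    have h₁ := integral_sin_pow_add_two (6 * n + 3)
    have h₂ := integral_sin_pow_add_two (6 * n + 5)
    have h₃ := integral_sin_pow_add_two (6 * n + 7)
    rw [show 6 * (n + 1) + 3 = 6 * n + 7 + 2 by ring]
    simp only [poch_succ, show 6 * n + 3 + 2 = 6 * n + 5 by ring,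
      show 6 * n + 5 + 2 = 6 * n + 7 by ring] at *
    push_cast at *
    linear_combination (poch (5/6) n * poch (7/6) n * poch (3/2) n / 72) *
        ((6 * n + 5) * (6 * n + 7) * h₃ + (6 * n + 5) * (6 * n + 8) * h₂
          + (6 * n + 6) * (6 * n + 8) * h₁)
      + ((6 * n + 4) * (6 * n + 6) * (6 * n + 8) / 216 : ℝ) * ih

lemma fiveF4_term_eq (n : ℕ) :
    poch (1/2) n * poch (2/3) n * poch 1 n * poch 1 n * poch (4/3) n
        / (poch (5/6) n * poch (7/6) n * poch (3/2) n * poch (3/2) n * (Nat.factorial n))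
        * (-1 : ℝ) ^ n =
      3 / 4 * ((-1) ^ n * (∫ x in 0..π, sin x ^ (3 * (2 * n + 1))) / (2 * n + 1)) := by
  rw [show 3 * (2 * n + 1) = 6 * n + 3 by ring]
  have h₃₂ : poch (3/2) n = (2 * n + 1) * poch (1/2) n := by
    have := poch_add_one_mul (1/2) n
    norm_num at this
    linarith
  have := poch_pos (show (0 : ℝ) < 5/6 by norm_num) n
  have := poch_pos (show (0 : ℝ) < 7/6 by norm_num) n
  have := poch_pos (show (0 : ℝ) < 3/2 by norm_num) n
  rw [← poch_one]
  field_simp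
  linear_combination (-4 * poch (2/3) n * poch 1 n * poch (4/3) n) * h₃₂
    - poch (3/2) n * integral_sin_pow_six_mul_add_three_mul_poch n

lemma summable_integral_sin_pow_div {m : ℕ} (hm : 1 ≤ m) :
    Summable fun n : ℕ => (∫ x in 0..π, sin x ^ (m * (2 * n + 1))) / (2 * n + 1) := by
  have hg : Summable fun n : ℕ => √(2 * π) * (1 / ((n : ℝ) + 1) ^ ((3 : ℝ) / 2)) := by
    refine .mul_left _ (((summable_nat_add_iff 1).mpr
      ((summable_one_div_nat_rpow (p := 3 / 2)).mpr (by norm_num))).congr fun n => ?_)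
    push_cast; rfl
  refine hg.of_nonneg_of_le (fun n => div_nonneg (integral_sin_pow_pos _).le (by positivity))
    fun n => ?_
  have hn : (0 : ℝ) < n + 1 := by positivity
  have h_rpow : ((n : ℝ) + 1) ^ ((3 : ℝ) / 2) = (n + 1) * √(n + 1) := by
    rw [show (3 : ℝ) / 2 = 1 + 1 / 2 by norm_num, rpow_add hn, rpow_one, sqrt_eq_rpow]
  have h_sin : ∫ x in 0..π, sin x ^ (m * (2 * n + 1)) ≤ √(2 * π) / √(n + 1) := calc
    _ ≤ ∫ x in 0..π, sin x ^ (2 * n + 1) :=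
      integral_sin_pow_antitone (Nat.le_mul_of_pos_left _ hm)
    _ ≤ √(2 * π / (2 * n + 1)) := by exact_mod_cast integral_sin_pow_succ_le_sqrt (2 * n)
    _ ≤ √(2 * π / (n + 1)) := sqrt_le_sqrt (by gcongr; linarith)
    _ = √(2 * π) / √(n + 1) := sqrt_div' _ hn.le
  calc _ ≤ √(2 * π) / √(n + 1) / (n + 1) :=
        div_le_div₀ (by positivity) h_sin hn (by linarith)
    _ = _ := by rw [h_rpow]; field_simp

lemma abs_sin_lt_one_of_ne {x : ℝ} (hx : x ∈ Icc 0 π) (hx' : x ≠ π / 2) : |sin x| < 1 := by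
  have hcos : cos x ≠ 0 := by
    rcases hx'.lt_or_gt with h | h
    · exact (cos_pos_of_mem_Ioo ⟨by linarith [hx.1, pi_pos], h⟩).ne'
    · exact (cos_neg_of_pi_div_two_lt_of_lt h (by linarith [hx.2, pi_pos])).ne
  have := sin_sq_add_cos_sq x
  have := pow_pos (abs_pos.mpr hcos) 2
  rw [sq_abs] at this
  rw [← sq_lt_one_iff_abs_lt_one]
  linarith

lemma integral_arctan_sin_pow {m : ℕ} (hm : 1 ≤ m) :
    ∫ x in 0..π, arctan (sin x ^ m) =
      ∑' n : ℕ, (-1) ^ n * (∫ x in 0..π, sin x ^ (m * (2 * n + 1))) / (2 * n + 1) := by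
  set F : ℕ → ℝ → ℝ := fun n x => (-1) ^ n / (2 * n + 1) * sin x ^ (m * (2 * n + 1))
  have hF_cont (n : ℕ) : Continuous (F n) := by fun_prop
  have h_norm (n : ℕ) : ∫ x in Ioc 0 π, ‖F n x‖ =
      (∫ x in 0..π, sin x ^ (m * (2 * n + 1))) / (2 * n + 1) := by
    rw [integral_of_le pi_pos.le, ← MeasureTheory.integral_div]
    refine setIntegral_congr_fun measurableSet_Ioc fun x hx => ?_
    have h_sin := sin_nonneg_of_nonneg_of_le_pi hx.1.le hx.2
    have h_pos : (0 : ℝ) ≤ 2 * n + 1 := by positivity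
    simp [F, abs_of_nonneg, h_sin, h_pos, div_eq_inv_mul]
  have h_sum : ∀ᵐ x ∂volume.restrict (Ioc 0 π), ∑' n, F n x = arctan (sin x ^ m) := by
    rw [ae_restrict_iff' measurableSet_Ioc]
    filter_upwards [Measure.ae_ne volume (π / 2)] with x hx hx'
    have h_lt : ‖sin x ^ m‖ < 1 := by
      rw [norm_pow, Real.norm_eq_abs]
      exact pow_lt_one₀ (abs_nonneg _) (abs_sin_lt_one_of_ne (Ioc_subset_Icc_self hx') hx)
        (by omega)
    refine ((hasSum_arctan h_lt).congr_fun fun n => ?_).tsum_eq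
    simp only [F, ← pow_mul]
    push_cast
    ring
  rw [integral_of_le pi_pos.le, ← integral_congr_ae h_sum,
    ← integral_tsum_of_summable_integral_norm (fun n => (hF_cont n).integrableOn_Ioc)
      ((summable_integral_sin_pow_div hm).congr fun n => (h_norm n).symm)]
  refine tsum_congr fun n => ?_
  rw [← integral_of_le pi_pos.le, intervalIntegral.integral_const_mul]
  ring

lemma integral_comp_sin_eq_two_mul {f : ℝ → ℝ} (hf : Continuous f) :
    ∫ x in 0..π, f (sin x) = 2 * ∫ x in 0..π / 2, f (sin x) := by
  have h_int (a b : ℝ) : IntervalIntegrable (fun x => f (sin x)) volume a b :=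
    (hf.comp continuous_sin).intervalIntegrable a b
  have h_refl : ∫ x in π / 2..π, f (sin x) = ∫ x in 0..π / 2, f (sin x) := by
    simpa [sin_pi_sub, show π - π / 2 = π / 2 by ring] using
      (integral_comp_sub_left (fun x => f (sin x)) π (a := 0) (b := π / 2)).symm
  rw [← integral_add_adjacent_intervals (h_int 0 (π / 2)) (h_int (π / 2) π), h_refl]
  ring

lemma arctan_pow_three_add_arctan {s : ℝ} (hs : |s| < 1) :
    arctan (s ^ 3) + arctan s = arctan (s / (1 - s ^ 2)) := by
  have h_sq : s ^ 2 < 1 := by rwa [sq_lt_one_iff_abs_lt_one]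
  rw [arctan_add (by nlinarith [sq_nonneg s, sq_nonneg (s ^ 2)])]
  congr 1
  rw [div_eq_div_iff (by nlinarith [sq_nonneg s]) (by linarith)]
  ring

lemma norm_arctan_le (x : ℝ) : ‖arctan x‖ ≤ π / 2 := by
  rw [Real.norm_eq_abs, abs_le]
  exact ⟨(neg_pi_div_two_lt_arctan x).le, (arctan_lt_pi_div_two x).le⟩

lemma intervalIntegrable_arctan_comp {f : ℝ → ℝ} (hf : Measurable f) (a b : ℝ) :
    IntervalIntegrable (fun x => arctan (f x)) volume a b :=
  intervalIntegrable_const.mono_fun' (g := fun _ => π / 2)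
    (continuous_arctan.measurable.comp hf).aestronglyMeasurable
    (.of_forall fun _ => norm_arctan_le _)

lemma integral_arctan_sin_pow_three :
    ∫ x in 0..π / 2, arctan (sin x ^ 3) =
      (∫ x in 0..π / 2, arctan (sin x / cos x ^ 2)) - ∫ x in 0..π / 2, arctan (sin x) := by
  rw [← intervalIntegral.integral_sub (intervalIntegrable_arctan_comp (by fun_prop) _ _)
    (intervalIntegrable_arctan_comp (by fun_prop) _ _)]
  refine integral_congr_ae ?_
  filter_upwards [Measure.ae_ne volume (π / 2)] with x hx hx'
  rw [uIoc_of_le (by positivity)] at hx'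
  have h_abs := abs_sin_lt_one_of_ne ⟨hx'.1.le, by linarith [hx'.2, pi_pos]⟩ hx
  rw [cos_sq', ← arctan_pow_three_add_arctan h_abs, add_sub_cancel_right]

lemma hasDerivAt_artanh {t : ℝ} (ht : t ∈ Ioo (-1) 1) : HasDerivAt artanh (1 - t ^ 2)⁻¹ t := by
  obtain ⟨h₁, h₂⟩ := ht
  have h_eq : (fun x => 1 / 2 * log ((1 + x) / (1 - x))) =ᶠ[𝓝 t] artanh :=
    eventually_of_mem (Ioo_mem_nhds h₁ h₂) fun x hx =>
      (artanh_eq_half_log (Ioo_subset_Icc_self hx)).symm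
  refine HasDerivAt.congr_of_eventuallyEq ?_ h_eq.symm
  have h_num : HasDerivAt (fun x : ℝ => 1 + x) 1 t := (hasDerivAt_id' t).const_add 1
  have h_den : HasDerivAt (fun x : ℝ => 1 - x) (-1) t := by
    simpa using (hasDerivAt_id' t).const_sub 1
  refine (((h_num.div h_den (by linarith)).log
    (div_pos (by linarith) (by linarith)).ne').const_mul (1 / 2)).congr_deriv ?_
  have : 1 + t ≠ 0 := by linarith
  have : 1 - t ≠ 0 := by linarith
  have : 1 - t ^ 2 ≠ 0 := by nlinarith
  simp only [Pi.div_apply]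
  field_simp
  ring

lemma artanh_eq_log_sub_log {c s : ℝ} (hs : 0 < s) (h : s ^ 2 + c ^ 2 = 1) :
    artanh c = log (1 + c) - log s := by
  have hc : -1 < c := by nlinarith
  have hc' : c < 1 := by nlinarith
  rw [artanh_eq_half_log ⟨hc.le, hc'.le⟩,
    show (1 + c) / (1 - c) = ((1 + c) / s) ^ 2 by
      rw [div_pow, div_eq_div_iff (by linarith) (by positivity)]
      linear_combination (1 + c) * h,
    log_pow, log_div (by linarith) hs.ne']
  push_cast
  ring

lemma artanh_sqrt_two_div_two : artanh (√2 / 2) = log (√2 + 1) := by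
  have h := sq_sqrt (show (0 : ℝ) ≤ 2 by norm_num)
  rw [artanh_eq_log_sub_log (s := √2 / 2) (by positivity)
    (by linear_combination h / 2), ← log_div (by positivity) (by positivity)]
  congr 1
  field_simp
  linear_combination -h

lemma tendsto_artanh_mul_log : Tendsto (fun s => artanh s * log s) (𝓝[>] 0) (𝓝 0) := by
  have h_slope : Tendsto (fun s => artanh s / s) (𝓝[>] 0) (𝓝 1) := by
    have := (hasDerivAt_artanh (t := 0) (by norm_num)).tendsto_slope_zero
    simp only [zero_add, artanh_zero, sub_zero, smul_eq_mul, inv_mul_eq_div] at this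
    norm_num at this
    exact this.mono_left (nhdsWithin_mono _ fun s hs => ne_of_gt hs)
  have h_mul_log : Tendsto (fun s => s * log s) (𝓝[>] 0) (𝓝 0) := by
    simpa using continuous_mul_log.continuousAt.tendsto.mono_left (nhdsWithin_le_nhds (a := 0))
  have h_prod := h_slope.mul h_mul_log
  rw [mul_zero] at h_prod
  refine h_prod.congr' ?_
  filter_upwards [self_mem_nhdsWithin] with s (hs : 0 < s)
  field_simp

lemma tendsto_sin_nhdsGT_zero : Tendsto sin (𝓝[>] 0) (𝓝[>] 0) :=
  tendsto_nhdsWithin_of_tendsto_nhds_of_eventually_within _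
    (by simpa using continuous_sin.tendsto 0 |>.mono_left nhdsWithin_le_nhds)
    (by filter_upwards [Ioo_mem_nhdsGT pi_pos] with ψ hψ using sin_pos_of_mem_Ioo hψ)

/-- `artanh (cos ψ) = log (1 + cos ψ) - log (sin ψ)` blows up only like `log ψ`. -/
lemma tendsto_artanh_sin_mul_artanh_cos :
    Tendsto (fun ψ => artanh (sin ψ) * artanh (cos ψ)) (𝓝[>] 0) (𝓝 0) := by
  have h_cont : ContinuousAt (fun ψ => artanh (sin ψ) * log (1 + cos ψ)) 0 :=
    ((hasDerivAt_artanh (by simp)).continuousAt.comp continuous_sin.continuousAt).mul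
      ((continuousAt_log (by norm_num)).comp (by fun_prop))
  have h_lim := (h_cont.tendsto.mono_left nhdsWithin_le_nhds).sub
    (tendsto_artanh_mul_log.comp tendsto_sin_nhdsGT_zero)
  simp only [sin_zero, artanh_zero, zero_mul, sub_zero] at h_lim
  refine h_lim.congr' ?_
  filter_upwards [Ioo_mem_nhdsGT (show (0 : ℝ) < π / 2 by positivity)] with ψ hψ
  have h_sin := sin_pos_of_pos_of_lt_pi hψ.1 (by linarith [hψ.2, pi_pos])
  simp only [Function.comp_apply]
  rw [artanh_eq_log_sub_log h_sin (sin_sq_add_cos_sq ψ)]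
  ring

lemma integral_sin_div_one_sub_sq_mul_cos_sq {b : ℝ} (hb : b ≠ 0) (hb' : |b| < 1) :
    ∫ x in 0..π / 2, sin x / (1 - b ^ 2 * cos x ^ 2) = artanh b / b := by
  have h_mem (x : ℝ) : b * cos x ∈ Ioo (-1) 1 := by
    rw [mem_Ioo, ← abs_lt, abs_mul]
    exact (mul_le_of_le_one_right (abs_nonneg b) (abs_cos_le_one x)).trans_lt hb'
  have h_den (x : ℝ) : 1 - b ^ 2 * cos x ^ 2 ≠ 0 := by
    nlinarith [(h_mem x).1, (h_mem x).2]
  have h_deriv : ∀ x ∈ uIcc 0 (π / 2), HasDerivAt (fun y => -artanh (b * cos y) / b)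
      (sin x / (1 - b ^ 2 * cos x ^ 2)) x := fun x _ => by
    refine (((hasDerivAt_artanh (h_mem x)).comp x ((hasDerivAt_cos x).const_mul b)).neg.div_const
      b).congr_deriv ?_
    have := h_den x
    field_simp
  rw [integral_eq_sub_of_hasDerivAt h_deriv
    ((continuous_sin.div (by fun_prop) h_den).intervalIntegrable _ _)]
  simp [neg_div]

noncomputable def arctanTanSinIntegral (θ : ℝ) : ℝ := ∫ x in 0..π / 2, arctan (tan θ * sin x)

lemma hasDerivAt_arctan_tan_mul {θ : ℝ} (hθ : cos θ ≠ 0) (y : ℝ) :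
    HasDerivAt (fun θ => arctan (tan θ * sin y)) (sin y / (1 - sin θ ^ 2 * cos y ^ 2)) θ := by
  refine ((hasDerivAt_tan hθ).mul_const (sin y)).arctan.congr_deriv ?_
  have h₁ := sin_sq_add_cos_sq θ
  have h₂ := sin_sq_add_cos_sq y
  have h_den : cos θ ^ 2 * (1 + (tan θ * sin y) ^ 2) = 1 - sin θ ^ 2 * cos y ^ 2 := by
    rw [tan_eq_sin_div_cos]
    field_simp
    linear_combination h₁ + sin θ ^ 2 * h₂
  rw [← h_den]
  field_simp

lemma hasDerivAt_arctanTanSinIntegral {θ : ℝ} (hθ : θ ∈ Ioo 0 (π / 2)) :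
    HasDerivAt arctanTanSinIntegral (artanh (sin θ) / sin θ) θ := by
  obtain ⟨h₀, h₁⟩ := hθ
  obtain ⟨θ₂, hθθ₂, hθ₂⟩ := exists_between h₁
  have h_cos₂ : 0 < cos θ₂ := cos_pos_of_mem_Ioo ⟨by linarith, hθ₂⟩
  have h_den {θ' : ℝ} (hθ' : θ' ∈ Ioo 0 θ₂) (x : ℝ) :
      cos θ₂ ^ 2 ≤ 1 - sin θ' ^ 2 * cos x ^ 2 := by
    have := pow_le_pow_left₀ h_cos₂.le
      (cos_le_cos_of_nonneg_of_le_pi hθ'.1.le (by linarith) hθ'.2.le) 2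
    have := sin_sq_add_cos_sq θ'
    have := mul_le_of_le_one_right (sq_nonneg (sin θ')) (cos_sq_le_one x)
    linarith
  have h_cos {θ' : ℝ} (hθ' : θ' ∈ Ioo 0 θ₂) : cos θ' ≠ 0 :=
    (cos_pos_of_mem_Ioo ⟨by linarith [hθ'.1], by linarith [hθ'.2]⟩).ne'
  have hθ : θ ∈ Ioo 0 θ₂ := ⟨h₀, hθθ₂⟩
  have h_cont : Continuous fun x => sin x / (1 - sin θ ^ 2 * cos x ^ 2) :=
    continuous_sin.div (by fun_prop) fun x => ((pow_pos h_cos₂ 2).trans_le (h_den hθ x)).ne'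
  obtain ⟨-, h⟩ := intervalIntegral.hasDerivAt_integral_of_dominated_loc_of_deriv_le
    (F := fun θ x => arctan (tan θ * sin x))
    (F' := fun θ x => sin x / (1 - sin θ ^ 2 * cos x ^ 2)) (bound := fun _ => (cos θ₂ ^ 2)⁻¹)
    (Ioo_mem_nhds h₀ hθ.2)
    (.of_forall fun _ => (by fun_prop : Continuous _).aestronglyMeasurable)
    ((by fun_prop : Continuous _).intervalIntegrable _ _)
    h_cont.aestronglyMeasurable
    (.of_forall fun x _ θ' hθ' => by
      have h_pos := (pow_pos h_cos₂ 2).trans_le (h_den hθ' x)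
      rw [Real.norm_eq_abs, abs_div, abs_of_pos h_pos]
      exact div_le_div₀ zero_le_one (abs_sin_le_one x) (pow_pos h_cos₂ 2) (h_den hθ' x)
        |>.trans_eq (one_div _))
    (intervalIntegrable_const (μ := volume))
    (.of_forall fun x _ θ' hθ' => hasDerivAt_arctan_tan_mul (h_cos hθ') x)
  rwa [integral_sin_div_one_sub_sq_mul_cos_sq (sin_pos_of_pos_of_lt_pi h₀ (by linarith)).ne'
    (abs_sin_lt_one_of_ne ⟨h₀.le, by linarith⟩ h₁.ne)] at h

lemma continuousAt_arctanTanSinIntegral_zero : ContinuousAt arctanTanSinIntegral 0 :=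
  intervalIntegral.continuousAt_of_dominated_interval (bound := fun _ => π / 2)
    (.of_forall fun _ => (by fun_prop : Continuous _).aestronglyMeasurable)
    (.of_forall fun _ => .of_forall fun _ _ => norm_arctan_le _) intervalIntegrable_const
    (.of_forall fun _ _ => continuous_arctan.continuousAt.comp
      ((continuousAt_tan.mpr (by simp)).mul continuousAt_const))

lemma tendsto_arctanTanSinIntegral_pi_div_two :
    Tendsto arctanTanSinIntegral (𝓝[<] (π / 2)) (𝓝 (π ^ 2 / 4)) := by
  have h_lim := intervalIntegral.tendsto_integral_filter_of_dominated_convergence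
    (a := 0) (b := π / 2) (μ := volume) (l := 𝓝[<] (π / 2))
    (F := fun θ x => arctan (tan θ * sin x)) (f := fun _ => π / 2) (fun _ => π / 2)
    (.of_forall fun _ => (by fun_prop : Continuous _).aestronglyMeasurable)
    (.of_forall fun _ => .of_forall fun _ _ => norm_arctan_le _) intervalIntegrable_const
    (.of_forall fun x hx => by
      rw [uIoc_of_le (by positivity)] at hx
      have h_sin : 0 < sin x := sin_pos_of_pos_of_lt_pi hx.1 (by linarith [hx.2, pi_pos])
      exact tendsto_arctan_atTop.mono_right nhdsWithin_le_nhds |>.comp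
        (tendsto_tan_pi_div_two.atTop_mul_const h_sin))
  rw [intervalIntegral.integral_const, smul_eq_mul, sub_zero,
    show π / 2 * (π / 2) = π ^ 2 / 4 by ring] at h_lim
  exact h_lim

lemma hasDerivAt_arctanTanSinIntegral_add_reflect {ψ : ℝ} (hψ : ψ ∈ Ioo 0 (π / 2)) :
    HasDerivAt (fun ψ => arctanTanSinIntegral ψ + arctanTanSinIntegral (π / 2 - ψ) +
      artanh (sin ψ) * artanh (cos ψ)) 0 ψ := by
  have h_sin := sin_pos_of_pos_of_lt_pi hψ.1 (by linarith [hψ.2, pi_pos])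
  have h_cos := cos_pos_of_mem_Ioo ⟨by linarith [hψ.1, pi_pos], hψ.2⟩
  have h_pyth := sin_sq_add_cos_sq ψ
  have h₁ := hasDerivAt_arctanTanSinIntegral hψ
  have h₂ := (hasDerivAt_arctanTanSinIntegral (θ := π / 2 - ψ)
    ⟨by linarith [hψ.2], by linarith [hψ.1]⟩).comp ψ ((hasDerivAt_id ψ).const_sub (π / 2))
  have h₃ := (hasDerivAt_artanh (t := sin ψ) ⟨by linarith, by nlinarith⟩).comp ψ
    (hasDerivAt_sin ψ)
  have h₄ := (hasDerivAt_artanh (t := cos ψ) ⟨by linarith, by nlinarith⟩).comp ψ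
    (hasDerivAt_cos ψ)
  refine ((h₁.add h₂).add (h₃.mul h₄)).congr_deriv ?_
  rw [sin_pi_div_two_sub, show 1 - sin ψ ^ 2 = cos ψ ^ 2 by linarith,
    show 1 - cos ψ ^ 2 = sin ψ ^ 2 by linarith]
  simp only [Function.comp_apply]
  field_simp
  ring

/-- The left side is constant on `(0, π/2)` and tends to `0 + π²/4 + 0` as `θ → 0⁺`. -/
lemma arctanTanSinIntegral_add_reflect {θ : ℝ} (hθ : θ ∈ Ioo 0 (π / 2)) :
    arctanTanSinIntegral θ + arctanTanSinIntegral (π / 2 - θ) +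
      artanh (sin θ) * artanh (cos θ) = π ^ 2 / 4 := by
  set Φ := fun ψ => arctanTanSinIntegral ψ + arctanTanSinIntegral (π / 2 - ψ) +
    artanh (sin ψ) * artanh (cos ψ)
  have h_const : ∀ᶠ ψ in 𝓝[>] 0, Φ ψ = Φ θ := by
    filter_upwards [Ioo_mem_nhdsGT (show (0 : ℝ) < π / 2 by positivity)] with ψ hψ
    exact isOpen_Ioo.is_const_of_deriv_eq_zero isPreconnected_Ioo
      (fun x hx => (hasDerivAt_arctanTanSinIntegral_add_reflect hx).differentiableAt
        |>.differentiableWithinAt)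
      (fun x hx => (hasDerivAt_arctanTanSinIntegral_add_reflect hx).deriv) hψ hθ
  have h_refl : Tendsto (fun ψ => π / 2 - ψ) (𝓝[>] 0) (𝓝[<] (π / 2)) := by
    refine tendsto_nhdsWithin_of_tendsto_nhds_of_eventually_within _ ?_ ?_
    · have : Continuous fun ψ : ℝ => π / 2 - ψ := by fun_prop
      simpa using (this.tendsto 0).mono_left nhdsWithin_le_nhds
    · filter_upwards [self_mem_nhdsWithin] with ψ (hψ : 0 < ψ)
      simpa using hψ
  have h_lim : Tendsto Φ (𝓝[>] 0) (𝓝 (π ^ 2 / 4)) := by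
    have h := ((continuousAt_arctanTanSinIntegral_zero.tendsto.mono_left nhdsWithin_le_nhds).add
      (tendsto_arctanTanSinIntegral_pi_div_two.comp h_refl)).add tendsto_artanh_sin_mul_artanh_cos
    rwa [show arctanTanSinIntegral 0 = 0 by simp [arctanTanSinIntegral], zero_add,
      add_zero] at h
  exact tendsto_nhds_unique ((tendsto_const_nhds (x := Φ θ)).congr'
    (h_const.mono fun _ h => h.symm)) h_lim

lemma integral_arctan_sin :
    ∫ x in 0..π / 2, arctan (sin x) = π ^ 2 / 8 - log (√2 + 1) ^ 2 / 2 := by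
  have h := arctanTanSinIntegral_add_reflect (θ := π / 4) ⟨by positivity, by linarith [pi_pos]⟩
  simp only [arctanTanSinIntegral, show π / 2 - π / 4 = π / 4 by ring, tan_pi_div_four, one_mul,
    sin_pi_div_four, cos_pi_div_four, artanh_sqrt_two_div_two] at h
  linarith

/-- Partial fractions over `u⁴ - a² u² + a² = (u² - p u + a) (u² + p u + a)` when
`p² = a² + 2a`; the factors are `(u ∓ p/2)² + r²/4` when `r² = 2a - a²`. -/
noncomputable def quarticPrimitive (a p r u : ℝ) : ℝ :=
  (log (u ^ 2 - p * u + a) - log (u ^ 2 + p * u + a)) / (4 * p) +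
    (arctan ((2 * u - p) / r) + arctan ((2 * u + p) / r)) / (2 * r)

lemma hasDerivAt_quarticPrimitive {a p r : ℝ} (hr : 0 < r)
    (hp₂ : p ^ 2 = a ^ 2 + 2 * a) (hr₂ : r ^ 2 = 2 * a - a ^ 2) (u : ℝ) :
    HasDerivAt (quarticPrimitive a p r) (u ^ 2 / (u ^ 4 - a ^ 2 * u ^ 2 + a ^ 2)) u := by
  have hp : p ≠ 0 := by rintro rfl; nlinarith
  have hq₁ : 0 < u ^ 2 - p * u + a := by nlinarith [sq_nonneg (2 * u - p)]
  have hq₂ : 0 < u ^ 2 + p * u + a := by nlinarith [sq_nonneg (2 * u + p)]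
  have h_fac : u ^ 4 - a ^ 2 * u ^ 2 + a ^ 2 = (u ^ 2 - p * u + a) * (u ^ 2 + p * u + a) := by
    linear_combination u ^ 2 * hp₂
  have h_sq : HasDerivAt (fun u : ℝ => u ^ 2) (2 * u) u := by simpa using hasDerivAt_pow 2 u
  have h_lin (c : ℝ) : HasDerivAt (fun u => (2 * u + c) / r) (2 / r) u := by
    simpa using (((hasDerivAt_id u).const_mul 2).add_const c).div_const r
  have h_log₁ := ((h_sq.sub ((hasDerivAt_id u).const_mul p)).add_const a).log hq₁.ne'
  have h_log₂ := ((h_sq.add ((hasDerivAt_id u).const_mul p)).add_const a).log hq₂.ne'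
  have h_atan₁ := (h_lin (-p)).arctan
  have h_atan₂ := (h_lin p).arctan
  refine (((h_log₁.sub h_log₂).div_const (4 * p)).add
    ((h_atan₁.add h_atan₂).div_const (2 * r))).congr_deriv ?_
  have h_atan_den {c : ℝ} (hc : c ^ 2 = p ^ 2) :
      1 + ((2 * u + c) / r) ^ 2 = 4 * (u ^ 2 + c * u + a) / r ^ 2 := by
    field_simp
    linear_combination hr₂ + hc + hp₂
  rw [h_atan_den (neg_sq p), h_atan_den rfl, h_fac]
  simp only [Pi.sub_apply, Pi.add_apply, id, mul_one, neg_mul, ← sub_eq_add_neg]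
  set q₁ := u ^ 2 - p * u + a with hq₁_def
  set q₂ := u ^ 2 + p * u + a with hq₂_def
  have := hq₁.ne'
  have := hq₂.ne'
  field_simp
  rw [hq₁_def, hq₂_def]
  ring

lemma integral_sin_mul_cos_sq_div {a p r : ℝ} (hr : 0 < r)
    (hp₂ : p ^ 2 = a ^ 2 + 2 * a) (hr₂ : r ^ 2 = 2 * a - a ^ 2) :
    ∫ x in 0..π / 2, sin x * cos x ^ 2 / (cos x ^ 4 + a ^ 2 * sin x ^ 2) =
      quarticPrimitive a p r 1 := by
  have h_den (x : ℝ) : cos x ^ 4 + a ^ 2 * sin x ^ 2 = cos x ^ 4 - a ^ 2 * cos x ^ 2 + a ^ 2 := by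
    linear_combination a ^ 2 * sin_sq_add_cos_sq x
  have h_pos (x : ℝ) : 0 < cos x ^ 4 + a ^ 2 * sin x ^ 2 := by
    rw [h_den]
    nlinarith [sq_nonneg (cos x ^ 2 - a ^ 2 / 2), sq_pos_of_pos hr]
  have h_deriv : ∀ x ∈ uIcc 0 (π / 2), HasDerivAt (fun x => -quarticPrimitive a p r (cos x))
      (sin x * cos x ^ 2 / (cos x ^ 4 + a ^ 2 * sin x ^ 2)) x := fun x _ => by
    refine ((hasDerivAt_quarticPrimitive hr hp₂ hr₂ (cos x)).comp x
      (hasDerivAt_cos x)).neg.congr_deriv ?_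
    rw [h_den]
    ring
  have h_cont : Continuous fun x => sin x * cos x ^ 2 / (cos x ^ 4 + a ^ 2 * sin x ^ 2) :=
    (by fun_prop : Continuous fun x => sin x * cos x ^ 2).div (by fun_prop) fun x => (h_pos x).ne'
  rw [integral_eq_sub_of_hasDerivAt h_deriv (h_cont.intervalIntegrable _ _)]
  simp [quarticPrimitive, neg_div, arctan_neg]

lemma quarticPrimitive_one {a : ℝ} (ha₀ : 0 < a) (ha₁ : a < 1) :
    quarticPrimitive a √(a ^ 2 + 2 * a) √(2 * a - a ^ 2) 1 =
      log (1 + a - √(a ^ 2 + 2 * a)) / (2 * √(a ^ 2 + 2 * a)) +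
        (π - arccos (1 - a)) / (2 * √(2 * a - a ^ 2)) := by
  set p := √(a ^ 2 + 2 * a)
  set r := √(2 * a - a ^ 2)
  have hp₂ : p ^ 2 = a ^ 2 + 2 * a := sq_sqrt (by positivity)
  have hr₂ : r ^ 2 = 2 * a - a ^ 2 := sq_sqrt (by nlinarith)
  have hp : 0 < p := sqrt_pos.mpr (by positivity)
  have hr : 0 < r := sqrt_pos.mpr (by nlinarith)
  have hp_lt : p < 1 + a := by nlinarith
  have h_log : log (1 + a + p) = -log (1 + a - p) := by
    rw [← log_inv]
    congr 1
    field_simp [show 1 + a - p ≠ 0 by linarith]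
    linear_combination -hp₂
  have h_arctan : arctan ((2 - p) / r) + arctan ((2 + p) / r) = π - arccos (1 - a) := by
    have h_prod : 1 < (2 - p) / r * ((2 + p) / r) := by
      rw [div_mul_div_comm, one_lt_div (by positivity)]
      nlinarith
    have h_arccos : arccos (1 - a) = arctan (r / (1 - a)) := by
      rw [arccos_eq_arctan (by linarith), show 1 - (1 - a) ^ 2 = 2 * a - a ^ 2 by ring]
    rw [arctan_add_eq_add_pi h_prod (div_pos (by nlinarith) hr), h_arccos,
      show π - arctan (r / (1 - a)) = arctan (-(r / (1 - a))) + π by rw [arctan_neg]; ring]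
    congr 2
    field_simp
    rw [show r ^ 2 - (2 - p) * (2 + p) = -4 * (1 - a) by linear_combination hr₂ + hp₂]
    field_simp [show 1 - a ≠ 0 by linarith]
    ring
  simp only [quarticPrimitive, one_pow, mul_one]
  rw [show 1 - p + a = 1 + a - p by ring, show 1 + p + a = 1 + a + p by ring, h_log, h_arctan]
  field_simp
  ring

noncomputable def arctanTanSecIntegral (a : ℝ) : ℝ :=
  ∫ x in 0..π / 2, arctan (a * (sin x / cos x ^ 2))

lemma continuous_arctanTanSecIntegral : Continuous arctanTanSecIntegral :=
  intervalIntegral.continuous_of_dominated_interval (bound := fun _ => π / 2)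
    (fun a => (by fun_prop : Measurable fun x => arctan (a * (sin x / cos x ^ 2)))
      |>.aestronglyMeasurable)
    (fun _ => .of_forall fun _ _ => norm_arctan_le _) intervalIntegrable_const
    (.of_forall fun _ _ => by fun_prop)

/-- Where `cos x = 0`, both sides are `0` (`sin x / 0 = 0` in Lean). -/
lemma hasDerivAt_arctan_mul_sin_div_cos_sq (a x : ℝ) :
    HasDerivAt (fun a => arctan (a * (sin x / cos x ^ 2)))
      (sin x * cos x ^ 2 / (cos x ^ 4 + a ^ 2 * sin x ^ 2)) a := by
  refine ((hasDerivAt_id' a).mul_const _).arctan.congr_deriv ?_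
  rcases eq_or_ne (cos x) 0 with hc | hc
  · simp [hc]
  · field_simp

lemma hasDerivAt_arctanTanSecIntegral {a : ℝ} (ha : 0 < a) :
    HasDerivAt arctanTanSecIntegral
      (∫ x in 0..π / 2, sin x * cos x ^ 2 / (cos x ^ 4 + a ^ 2 * sin x ^ 2)) a := by
  have h_bound {a' : ℝ} (ha' : a / 2 < a') (x : ℝ) :
      ‖sin x * cos x ^ 2 / (cos x ^ 4 + a' ^ 2 * sin x ^ 2)‖ ≤ 1 / a := by
    rw [norm_div, norm_mul, norm_pow, Real.norm_eq_abs, Real.norm_eq_abs, Real.norm_eq_abs,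
      sq_abs, abs_of_nonneg (by positivity : 0 ≤ cos x ^ 4 + a' ^ 2 * sin x ^ 2)]
    refine div_le_of_le_mul₀ (by positivity) (by positivity) ?_
    -- AM-GM: `2 a' |sin x| cos² x ≤ cos⁴ x + a'² sin² x`
    have := sq_nonneg (cos x ^ 2 - a' * |sin x|)
    have := sq_abs (sin x)
    have : 0 ≤ |sin x| * cos x ^ 2 := by positivity
    rw [div_mul_eq_mul_div, one_mul, le_div_iff₀ ha]
    nlinarith
  exact (intervalIntegral.hasDerivAt_integral_of_dominated_loc_of_deriv_le
    (F := fun a x => arctan (a * (sin x / cos x ^ 2)))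
    (F' := fun a x => sin x * cos x ^ 2 / (cos x ^ 4 + a ^ 2 * sin x ^ 2))
    (bound := fun _ => 1 / a) (Ioi_mem_nhds (half_lt_self ha))
    (.of_forall fun _ => (by fun_prop : Measurable _).aestronglyMeasurable)
    (intervalIntegrable_arctan_comp (by fun_prop) _ _)
    ((by fun_prop : Measurable _).aestronglyMeasurable)
    (.of_forall fun x _ a' ha' => h_bound ha' x) (intervalIntegrable_const (μ := volume))
    (.of_forall fun x _ a' _ => hasDerivAt_arctan_mul_sin_div_cos_sq a' x)).2

/-- With `1 + a = cosh η` and `1 - a = cos χ`, this is `(π χ - χ² / 2) / 2 - η² / 4`. -/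
noncomputable def arctanTanSecClosedForm (a : ℝ) : ℝ :=
  (π * arccos (1 - a) - arccos (1 - a) ^ 2 / 2) / 2 - log (1 + a - √(a ^ 2 + 2 * a)) ^ 2 / 4

lemma hasDerivAt_arctanTanSecClosedForm {a : ℝ} (ha₀ : 0 < a) (ha₁ : a < 2) :
    HasDerivAt arctanTanSecClosedForm
      (log (1 + a - √(a ^ 2 + 2 * a)) / (2 * √(a ^ 2 + 2 * a)) +
        (π - arccos (1 - a)) / (2 * √(2 * a - a ^ 2))) a := by
  have hp : 0 < √(a ^ 2 + 2 * a) := sqrt_pos.mpr (by positivity)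
  have hp₂ : √(a ^ 2 + 2 * a) ^ 2 = a ^ 2 + 2 * a := sq_sqrt (by positivity)
  have h_log_pos : 0 < 1 + a - √(a ^ 2 + 2 * a) := by nlinarith
  have h_arccos : HasDerivAt (fun a => arccos (1 - a)) (1 / √(2 * a - a ^ 2)) a := by
    refine ((hasDerivAt_arccos (by linarith) (by linarith)).comp a
      ((hasDerivAt_id' a).const_sub 1)).congr_deriv ?_
    rw [show 1 - (1 - a) ^ 2 = 2 * a - a ^ 2 by ring]
    ring
  have h_sqrt : HasDerivAt (fun a => √(a ^ 2 + 2 * a)) ((2 * a + 2) / (2 * √(a ^ 2 + 2 * a))) a :=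
    ((hasDerivAt_pow 2 a).add ((hasDerivAt_id' a).const_mul 2)).sqrt
      (by positivity : a ^ 2 + 2 * a ≠ 0) |>.congr_deriv (by simp)
  have h_log := (((hasDerivAt_id' a).const_add 1).sub h_sqrt).log h_log_pos.ne'
  refine ((((h_arccos.const_mul π).sub ((h_arccos.pow 2).div_const 2)).div_const 2).sub
    ((h_log.pow 2).div_const 4)).congr_deriv ?_
  simp only [Pi.sub_apply]
  set p := √(a ^ 2 + 2 * a)
  have h_ratio : (1 - (2 * a + 2) / (2 * p)) / (1 + a - p) = -1 / p := by
    field_simp [h_log_pos.ne']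
    ring
  rw [h_ratio]
  field_simp
  ring

lemma arctanTanSecIntegral_eq_closedForm {a : ℝ} (ha₀ : 0 ≤ a) (ha₁ : a ≤ 1) :
    arctanTanSecIntegral a = arctanTanSecClosedForm a := by
  rcases ha₀.eq_or_lt with rfl | ha_pos
  · simp [arctanTanSecIntegral, arctanTanSecClosedForm]
  have h_deriv : ∀ b ∈ Ioo 0 a,
      HasDerivAt (fun b => arctanTanSecIntegral b - arctanTanSecClosedForm b) 0 b := by
    intro b ⟨hb₀, hb⟩
    have hC := hasDerivAt_arctanTanSecIntegral hb₀
    rw [integral_sin_mul_cos_sq_div (sqrt_pos.mpr (by nlinarith)) (sq_sqrt (by positivity))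
      (sq_sqrt (by nlinarith)), quarticPrimitive_one hb₀ (by linarith)] at hC
    exact (hC.sub (hasDerivAt_arctanTanSecClosedForm hb₀ (by linarith))).congr_deriv (sub_self _)
  have h_cont : ContinuousOn arctanTanSecClosedForm (Icc 0 a) := by
    refine .sub (by fun_prop) (.div_const (.pow (.log (by fun_prop) fun b hb => ?_) 2) 4)
    have := (sqrt_lt' (by linarith [hb.1])).mpr (show b ^ 2 + 2 * b < (1 + b) ^ 2 by nlinarith)
    linarith
  obtain ⟨c, -, hc⟩ := exists_hasDerivAt_eq_slope _ _ ha_pos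
    (continuous_arctanTanSecIntegral.continuousOn.sub h_cont) h_deriv
  have h_zero : arctanTanSecIntegral 0 - arctanTanSecClosedForm 0 = 0 := by
    simp [arctanTanSecIntegral, arctanTanSecClosedForm]
  rw [Pi.sub_apply, Pi.sub_apply, h_zero, sub_zero, sub_zero, eq_comm, div_eq_zero_iff] at hc
  exact sub_eq_zero.mp (hc.resolve_right ha_pos.ne')

lemma integral_arctan_sin_div_cos_sq :
    ∫ x in 0..π / 2, arctan (sin x / cos x ^ 2) = 3 * π ^ 2 / 16 - log (2 - √3) ^ 2 / 4 := by
  have h := arctanTanSecIntegral_eq_closedForm zero_le_one le_rfl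
  norm_num [arctanTanSecIntegral, arctanTanSecClosedForm] at h
  rw [h]
  ring

theorem fiveF4_arctan_sin_cube :
    ∑' n : ℕ,
        poch (1/2) n * poch (2/3) n * poch 1 n * poch 1 n * poch (4/3) n
          / (poch (5/6) n * poch (7/6) n * poch (3/2) n * poch (3/2) n * (Nat.factorial n))
          * (-1 : ℝ) ^ n =
      3 * Real.pi^2 / 32 + (3/4) * (Real.log (Real.sqrt 2 + 1))^2
        - (3/8) * (Real.log (2 - Real.sqrt 3))^2 := by
  have h_half := integral_comp_sin_eq_two_mul (f := fun s => arctan (s ^ 3)) (by fun_prop)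
  rw [tsum_congr fiveF4_term_eq, tsum_mul_left, ← integral_arctan_sin_pow (by norm_num), h_half,
    integral_arctan_sin_pow_three, integral_arctan_sin_div_cos_sq, integral_arctan_sin]
  ring
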